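/- Let G be an additive abelian group with at least two elements, m, n ≥ 2, A an m×n partial matrix over G, and B an (m−1)×(n−1) matrix over G. Suppose A is consistent with B. Then A has a unique completion C satisfying σ₋(C) = B if and only if the bipartite graph H_A is connected. -/

import Mathlib

/-- The balanced collapsing sum of an `(m+1) × (n+1)` matrix. -/
def bcs {G : Type*} [AddCommGroup G] {m n : ℕ}
    (A : Matrix (Fin (m + 1)) (Fin (n + 1)) G) : Matrix (Fin m) (Fin n) G :=
  fun i j => A i.castSucc j.castSucc - A i.succ j.castSucc
    - A i.castSucc j.succ + A i.succ j.succ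

/-- `C` is a completion of the partial matrix `A` (blank entries are `none`). -/
def IsCompletion {G : Type*} {m n : ℕ} (A : Matrix (Fin m) (Fin n) (Option G))
    (C : Matrix (Fin m) (Fin n) G) : Prop :=
  ∀ i j, A i j ≠ none → A i j = some (C i j)

/-- The bipartite graph `H_A` of a partial matrix `A`, on the vertex set
`{x_1, …, x_m} ⊕ {y_1, …, y_n}`, with an edge `(x_i, y_j)` whenever `a_{i,j} ≠ ∗`. -/
def HGraph {G : Type*} {m n : ℕ} (A : Matrix (Fin m) (Fin n) (Option G)) :
    SimpleGraph (Fin m ⊕ Fin n) :=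
  SimpleGraph.fromRel (fun u v =>
    ∃ i j, u = Sum.inl i ∧ v = Sum.inr j ∧ A i j ≠ none)

/-! The kernel of `bcs` consists of the matrices `p (x_i) - p (y_j)` for a potential `p` on the
vertices of `H_A`, and such a matrix vanishes on the specified entries of `A` exactly when `p` is
constant along the edges of `H_A`. Uniqueness of the completion therefore amounts to every
edge-constant potential being constant, which is connectedness. -/

namespace SimpleGraph

variable {V X : Type*} {Γ : SimpleGraph V} {f : V → X}

lemma Reachable.apply_eq_of_forall_adj (hf : ∀ u v, Γ.Adj u v → f u = f v) {u v : V}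
    (huv : Γ.Reachable u v) : f u = f v := by
  rw [reachable_iff_reflTransGen] at huv
  induction huv with
  | refl => rfl
  | tail _ hbc ih => exact ih.trans (hf _ _ hbc)

lemma connected_iff_forall_adj_const [Nonempty V] [Nontrivial X] :
    Γ.Connected ↔
      ∀ f : V → X, (∀ u v, Γ.Adj u v → f u = f v) → ∀ u v, f u = f v := by
  refine ⟨fun hΓ f hf u v => (hΓ.preconnected u v).apply_eq_of_forall_adj hf, fun h => ?_⟩
  refine (connected_iff Γ).2 ⟨fun u v => ?_, inferInstance⟩
  obtain ⟨a, b, hab⟩ := exists_pair_ne X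
  classical
  have hreach := h (fun w => if Γ.Reachable u w then a else b) (fun w w' hww' => by
    by_cases hw : Γ.Reachable u w
    · simp [hw, hw.trans hww'.reachable]
    · have hw' : ¬Γ.Reachable u w' := fun hw' => hw (hw'.trans hww'.symm.reachable)
      simp [hw, hw']) u v
  by_contra huv
  simp [huv, hab] at hreach

end SimpleGraph

section Potential

variable {α β G : Type*} [AddCommGroup G]

def potentialDiff (p : α ⊕ β → G) : Matrix α β G :=
  fun i j => p (Sum.inl i) - p (Sum.inr j)

lemma potentialDiff_eq_zero_iff [Nonempty α] [Nonempty β] {p : α ⊕ β → G} :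
    potentialDiff p = 0 ↔ ∀ u v, p u = p v := by
  refine ⟨fun h => ?_, fun h => funext₂ fun i j => sub_eq_zero.2 (h _ _)⟩
  have hij (i : α) (j : β) : p (Sum.inl i) = p (Sum.inr j) := sub_eq_zero.1 (congrFun₂ h i j)
  obtain ⟨i₀⟩ := ‹Nonempty α›
  obtain ⟨j₀⟩ := ‹Nonempty β›
  have hconst : ∀ u, p u = p (Sum.inr j₀) := by
    rintro (i | j)
    · exact hij i j₀
    · exact (hij i₀ j).symm.trans (hij i₀ j₀)
  exact fun u v => (hconst u).trans (hconst v).symm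

end Potential

section CollapsingSum

variable {G : Type*} [AddCommGroup G] {m n : ℕ}

lemma bcs_add (C D : Matrix (Fin (m + 1)) (Fin (n + 1)) G) : bcs (C + D) = bcs C + bcs D := by
  funext i j
  simp only [bcs, Matrix.add_apply]
  abel

lemma bcs_potentialDiff (p : Fin (m + 1) ⊕ Fin (n + 1) → G) : bcs (potentialDiff p) = 0 := by
  funext i j
  simp only [bcs, potentialDiff, Matrix.zero_apply]
  abel

lemma eq_of_bcs_eq_zero {D : Matrix (Fin (m + 1)) (Fin (n + 1)) G} (hD : bcs D = 0)
    (i : Fin (m + 1)) (j : Fin (n + 1)) : D i j = D i 0 + D 0 j - D 0 0 := by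
  have hstep (i : Fin m) (j : Fin n) : D i.succ j.succ
      = D i.succ j.castSucc + D i.castSucc j.succ - D i.castSucc j.castSucc := by
    have hij := congrFun₂ hD i j
    simp only [bcs, Matrix.zero_apply] at hij
    rw [← sub_eq_zero, ← hij]
    abel
  induction i using Fin.induction generalizing j with
  | zero => abel
  | succ i ih =>
    induction j using Fin.induction with
    | zero => abel
    | succ j ihj => rw [hstep, ihj, ih j.castSucc, ih j.succ]; abel

lemma exists_potentialDiff_of_bcs_eq_zero {D : Matrix (Fin (m + 1)) (Fin (n + 1)) G}
    (hD : bcs D = 0) : ∃ p, D = potentialDiff p :=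
  ⟨Sum.elim (fun i => D i 0) (fun j => D 0 0 - D 0 j), funext₂ fun i j => by
    rw [eq_of_bcs_eq_zero hD i j, potentialDiff, Sum.elim_inl, Sum.elim_inr]
    abel⟩

end CollapsingSum

section Completion

variable {G : Type*} [AddCommGroup G] {m n : ℕ}

lemma isCompletion_add_iff {A : Matrix (Fin m) (Fin n) (Option G)} {C : Matrix (Fin m) (Fin n) G}
    (hC : IsCompletion A C) (D : Matrix (Fin m) (Fin n) G) :
    IsCompletion A (C + D) ↔ ∀ i j, A i j ≠ none → D i j = 0 := by
  refine forall₂_congr fun i j => imp_congr_right fun hij => ?_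
  rw [hC i j hij, Matrix.add_apply, Option.some.injEq, left_eq_add]

lemma existsUnique_completion_iff {A : Matrix (Fin (m + 1)) (Fin (n + 1)) (Option G)}
    {B : Matrix (Fin m) (Fin n) G} {C : Matrix (Fin (m + 1)) (Fin (n + 1)) G}
    (hC : IsCompletion A C) (hB : bcs C = B) :
    (∃! C, IsCompletion A C ∧ bcs C = B) ↔
      ∀ D : Matrix (Fin (m + 1)) (Fin (n + 1)) G,
        bcs D = 0 → (∀ i j, A i j ≠ none → D i j = 0) → D = 0 := by
  constructor
  · rintro ⟨_, -, huniq⟩ D hD hDA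
    have hCD : C + D = C := (huniq _ ⟨(isCompletion_add_iff hC D).2 hDA, by
      rw [bcs_add, hD, hB, add_zero]⟩).trans (huniq C ⟨hC, hB⟩).symm
    exact left_eq_add.1 hCD.symm
  · refine fun h => ⟨C, ⟨hC, hB⟩, fun C' ⟨hC', hB'⟩ => ?_⟩
    have hsplit : C' = C + (C' - C) := (add_sub_cancel C C').symm
    rw [hsplit] at hC' hB'
    rw [bcs_add, hB, add_eq_left] at hB'
    exact sub_eq_zero.1 (h _ hB' ((isCompletion_add_iff hC _).1 hC'))

end Completion

lemma forall_hGraph_adj_iff {G X : Type*} {m n : ℕ} {A : Matrix (Fin m) (Fin n) (Option G)}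
    {p : Fin m ⊕ Fin n → X} :
    (∀ u v, (HGraph A).Adj u v → p u = p v) ↔
      ∀ i j, A i j ≠ none → p (Sum.inl i) = p (Sum.inr j) := by
  refine ⟨fun h i j hij => h _ _ ?_, fun h u v huv => ?_⟩
  · exact (SimpleGraph.fromRel_adj _ _ _).2 ⟨Sum.inl_ne_inr, Or.inl ⟨i, j, rfl, rfl, hij⟩⟩
  · obtain ⟨-, ⟨i, j, rfl, rfl, hij⟩ | ⟨i, j, rfl, rfl, hij⟩⟩ :=
      (SimpleGraph.fromRel_adj _ _ _).1 huv
    · exact h i j hij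
    · exact (h i j hij).symm

theorem stmt14_general {G : Type*} [AddCommGroup G] [Nontrivial G] {m n : ℕ}
    (A : Matrix (Fin (m + 1)) (Fin (n + 1)) (Option G))
    (B : Matrix (Fin m) (Fin n) G)
    (hcons : ∃ C, IsCompletion A C ∧ bcs C = B) :
    (∃! C, IsCompletion A C ∧ bcs C = B) ↔ (HGraph A).Connected := by
  obtain ⟨C, hC, hB⟩ := hcons
  have hvanish (p : Fin (m + 1) ⊕ Fin (n + 1) → G) :
      (∀ i j, A i j ≠ none → potentialDiff p i j = 0) ↔
        ∀ u v, (HGraph A).Adj u v → p u = p v := by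
    simp only [potentialDiff, sub_eq_zero, forall_hGraph_adj_iff]
  rw [existsUnique_completion_iff hC hB, SimpleGraph.connected_iff_forall_adj_const (X := G)]
  constructor
  · intro hker p hp
    exact potentialDiff_eq_zero_iff.1 (hker _ (bcs_potentialDiff p) ((hvanish p).2 hp))
  · intro hconst D hD hDA
    obtain ⟨p, rfl⟩ := exists_potentialDiff_of_bcs_eq_zero hD
    exact potentialDiff_eq_zero_iff.2 (hconst p ((hvanish p).1 hDA))

theorem stmt14 {G : Type*} [AddCommGroup G] [Nontrivial G] {m n : ℕ}
    (hm : 1 ≤ m) (hn : 1 ≤ n)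
    (A : Matrix (Fin (m + 1)) (Fin (n + 1)) (Option G))
    (B : Matrix (Fin m) (Fin n) G)
    (hcons : ∃ C, IsCompletion A C ∧ bcs C = B) :
    (∃! C, IsCompletion A C ∧ bcs C = B) ↔ (HGraph A).Connected :=
  stmt14_general A B hcons
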